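/- arXiv:2006.02701 — 3 statements merged into one kernel-verified Lean document; each statement's English description precedes it below -/
import Mathlib

section
/- Existence of a weak-* limit flux measure (Lemma 5). Let (ε_n) be admissible parameters with ε_n → 0 and u^{ε_n} solutions of the Helmholtz problem on Ω_{ε_n} satisfying the flux bound (1/ε_n²) ∫_{C_{ε_n}} |∂₂u^{ε_n}| ≤ C for all n. Define j^{ε}(x) := (1/(Lε²)) ∂₂u^{ε}(x) 𝟏_{C_ε}(x), and let K := [0,a]×[−b, L+V+1], a compact set containing Ω_ε for all small ε. Then there exist a subsequence (still denoted ε_n) and a continuous linear functional j_* on the Banach space C(K,ℝ) of continuous functions on K (with the sup norm) with operator norm at most C/L, such that ∫_{ℝ²} j^{ε_n} φ dx → j_*(φ|_K) for every continuous φ : ℝ² → ℝ, and such that j_*(ψ) = 0 for every ψ ∈ C(K,ℝ) vanishing on the segment [0,a]×{0} (i.e. the limit is a finite signed measure supported on the closure of Γ₀). -/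
open MeasureTheory Set Filter Topology

noncomputable section

/-- First partial derivative `∂₁u`. -/
def pd1 (u : ℝ × ℝ → ℝ) (x : ℝ × ℝ) : ℝ := fderiv ℝ u x (1, 0)

/-- Second partial derivative `∂₂u`. -/
def pd2 (u : ℝ × ℝ → ℝ) (x : ℝ × ℝ) : ℝ := fderiv ℝ u x (0, 1)

/-- The gradient `∇u` as a pair. -/
def grad (u : ℝ × ℝ → ℝ) (x : ℝ × ℝ) : ℝ × ℝ := (pd1 u x, pd2 u x)

/-- Euclidean scalar product on `ℝ²`. -/
def dot (p q : ℝ × ℝ) : ℝ := p.1 * q.1 + p.2 * q.2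

/-- The limit domain `Ω₀ = (0,a) × (−b,0)`. -/
def Omega0 (a b : ℝ) : Set (ℝ × ℝ) := Ioo 0 a ×ˢ Ioo (-b) 0

/-- The resonator strip `S_ε = (0,a) × (Lε, (L+V)ε)`. -/
def Strip (a L V ε : ℝ) : Set (ℝ × ℝ) := Ioo 0 a ×ˢ Ioo (L * ε) ((L + V) * ε)

/-- The channels `C_ε = ⋃_{k=0}^{a/ε−1} (kε, kε+αε³) × [0, Lε]`. -/
def Channels (a L α ε : ℝ) : Set (ℝ × ℝ) :=
  ⋃ k ∈ Finset.range ⌊a / ε⌋₊,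
    Ioo ((k : ℝ) * ε) ((k : ℝ) * ε + α * ε ^ 3) ×ˢ Icc 0 (L * ε)

/-- The perforated domain `Ω_ε = Ω₀ ∪ S_ε ∪ C_ε`. -/
def OmegaEps (a b L V α ε : ℝ) : Set (ℝ × ℝ) :=
  Omega0 a b ∪ Strip a L V ε ∪ Channels a L α ε

/-- `u` is C¹ on an open neighborhood of the closure of `s`. -/
def C1Nhd (u : ℝ × ℝ → ℝ) (s : Set (ℝ × ℝ)) : Prop :=
  ∃ U : Set (ℝ × ℝ), IsOpen U ∧ closure s ⊆ U ∧ ContDiffOn ℝ 1 u U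

/-- `ε` is an admissible parameter: `ε > 0` and `a/ε ∈ ℕ`. -/
def Admissible (a ε : ℝ) : Prop := 0 < ε ∧ ∃ N : ℕ, a = (N : ℝ) * ε

/-- Weak solution of the Helmholtz problem `−Δu − ω²u = f` in `Ω_ε` with
homogeneous Neumann boundary conditions. -/
def IsHelmholtzSol (a b L V α ω ε : ℝ) (f u : ℝ × ℝ → ℝ) : Prop :=
  C1Nhd u (OmegaEps a b L V α ε) ∧
  ∀ φ : ℝ × ℝ → ℝ, ContDiff ℝ 1 φ → HasCompactSupport φ →
    (∫ x in OmegaEps a b L V α ε, dot (grad u x) (grad φ x))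
      - ω ^ 2 * ∫ x in OmegaEps a b L V α ε, u x * φ x
      = ∫ x in OmegaEps a b L V α ε, f x * φ x

/-- Vertical average of `u` over the resonator strip. -/
def vEps (L V ε : ℝ) (u : ℝ × ℝ → ℝ) (x₁ : ℝ) : ℝ :=
  (1 / (ε * V)) * ∫ x₂ in (ε * L)..(ε * (L + V)), u (x₁, x₂)

/-- Corrector `w^ε = (u^ε − u)/ε`. -/
def wEps (ε : ℝ) (uε u : ℝ × ℝ → ℝ) : ℝ × ℝ → ℝ := fun x => (uε x - u x) / ε

/-!
The rescaled fluxes `j^ε`, viewed as functionals `ψ ↦ ∫ j^ε ψ` on the separable Banach space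
`C(K)`, have norm at most `(1/(Lε²)) ∫_{C_ε} |∂₂u^ε| ≤ C/L`. The sequential Banach–Alaoglu
theorem gives a weak-* convergent subsequence, and the limit keeps the bound `C/L`. Since `C_ε`
lies in the strip `0 ≤ x₂ ≤ Lε`, a function vanishing on the axis `x₂ = 0` is uniformly small on
the support of `j^ε` for small `ε`, so the limit annihilates it.
-/

theorem StrongDual.exists_strictMono_tendsto_apply_of_norm_le {𝕜 E : Type*}
    [NontriviallyNormedField 𝕜] [ProperSpace 𝕜] [SeminormedAddCommGroup E] [NormedSpace 𝕜 E]
    [TopologicalSpace.SeparableSpace E] {T : ℕ → StrongDual 𝕜 E} {r : ℝ}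
    (hT : ∀ n, ‖T n‖ ≤ r) :
    ∃ J : StrongDual 𝕜 E, ‖J‖ ≤ r ∧ ∃ σ : ℕ → ℕ, StrictMono σ ∧
      ∀ x, Tendsto (fun n => T (σ n) x) atTop (𝓝 (J x)) := by
  have hmem : ∀ n, StrongDual.toWeakDual (T n) ∈
      WeakDual.toStrongDual ⁻¹' Metric.closedBall (0 : StrongDual 𝕜 E) r := fun n => by
    simpa using hT n
  obtain ⟨J, hJ, σ, hσ, hlim⟩ := WeakDual.isSeqCompact_closedBall 𝕜 E 0 r hmem
  refine ⟨WeakDual.toStrongDual J, by simpa using hJ, σ, hσ, fun x => ?_⟩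
  exact ((WeakDual.eval_continuous x).tendsto J).comp hlim

namespace MeasureTheory

variable {X : Type*} [MeasurableSpace X] {μ : Measure X}

theorem abs_integral_mul_le_of_abs_le_on_support {h ψ : X → ℝ} (hh : Integrable h μ) {δ : ℝ}
    (hψ : ∀ x ∈ Function.support h, |ψ x| ≤ δ) :
    |∫ x, h x * ψ x ∂μ| ≤ δ * ∫ x, |h x| ∂μ := by
  rw [← integral_const_mul, ← Real.norm_eq_abs]
  refine norm_integral_le_of_norm_le (hh.abs.const_mul δ) (Eventually.of_forall fun x => ?_)
  rw [Real.norm_eq_abs, abs_mul, mul_comm δ]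
  by_cases hx : h x = 0
  · simp [hx]
  · exact mul_le_mul_of_nonneg_left (hψ x hx) (abs_nonneg _)

theorem tendsto_integral_mul_of_abs_le_on_support {ι : Type*} {l : Filter ι} {h : ι → X → ℝ}
    {ψ : X → ℝ} {M : ℝ} (hh : ∀ i, Integrable (h i) μ) (hM : ∀ i, ∫ x, |h i x| ∂μ ≤ M)
    (hψ : ∀ δ > 0, ∀ᶠ i in l, ∀ x ∈ Function.support (h i), |ψ x| ≤ δ) :
    Tendsto (fun i => ∫ x, h i x * ψ x ∂μ) l (𝓝 0) := by
  rw [Metric.tendsto_nhds]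
  intro e he
  have hδ : 0 < e / (|M| + 1) := by positivity
  filter_upwards [hψ _ hδ] with i hi
  rw [Real.dist_eq, sub_zero]
  calc |∫ x, h i x * ψ x ∂μ| ≤ e / (|M| + 1) * ∫ x, |h i x| ∂μ :=
        abs_integral_mul_le_of_abs_le_on_support (hh i) hi
    _ ≤ e / (|M| + 1) * |M| := by gcongr; exact (hM i).trans (le_abs_self M)
    _ < e := by
        rw [div_mul_eq_mul_div, div_lt_iff₀ (by positivity)]
        nlinarith

theorem integral_abs_comap_subtypeVal_le {K : Set X} (hK : MeasurableSet K) {g : X → ℝ}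
    (hg : Integrable g μ) : ∫ x : K, |g x| ∂μ.comap (↑) ≤ ∫ x, |g x| ∂μ :=
  (integral_subtype_comap hK _).trans_le
    (setIntegral_le_integral hg.abs (Eventually.of_forall fun _ => abs_nonneg _))

theorem integral_comap_subtypeVal_of_support_subset {K : Set X} (hK : MeasurableSet K)
    {g : X → ℝ} (hg : Function.support g ⊆ K) : ∫ x : K, g x ∂μ.comap (↑) = ∫ x, g x ∂μ :=
  (integral_subtype_comap hK g).trans <| setIntegral_eq_integral_of_forall_compl_eq_zero
    fun _ hx => Function.notMem_support.1 fun hg' => hx (hg hg')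

variable [TopologicalSpace X] [CompactSpace X] [OpensMeasurableSpace X] {h : X → ℝ}

theorem Integrable.integrable_mul_continuousMap (hh : Integrable h μ) (ψ : C(X, ℝ)) :
    Integrable (fun x => h x * ψ x) μ :=
  hh.mul_bdd ψ.continuous.aestronglyMeasurable
    (Eventually.of_forall fun x => ψ.norm_coe_le_norm x)

def Integrable.integralMulCLM (hh : Integrable h μ) : StrongDual ℝ C(X, ℝ) :=
  LinearMap.mkContinuous
    { toFun := fun ψ => ∫ x, h x * ψ x ∂μ
      map_add' := fun ψ χ => by
        simp only [ContinuousMap.add_apply, mul_add]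
        exact integral_add (hh.integrable_mul_continuousMap ψ)
          (hh.integrable_mul_continuousMap χ)
      map_smul' := fun r ψ => by
        simp only [ContinuousMap.smul_apply, smul_eq_mul, RingHom.id_apply, mul_left_comm _ r]
        exact integral_const_mul r _ }
    (∫ x, |h x| ∂μ)
    (fun ψ => by
      rw [mul_comm]
      exact abs_integral_mul_le_of_abs_le_on_support hh fun x _ => ψ.norm_coe_le_norm x)

theorem Integrable.integralMulCLM_apply (hh : Integrable h μ) (ψ : C(X, ℝ)) :
    hh.integralMulCLM ψ = ∫ x, h x * ψ x ∂μ :=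
  rfl

theorem Integrable.norm_integralMulCLM_le (hh : Integrable h μ) :
    ‖hh.integralMulCLM‖ ≤ ∫ x, |h x| ∂μ :=
  LinearMap.mkContinuous_norm_le _ (integral_nonneg fun _ => abs_nonneg _) _

end MeasureTheory

theorem ContinuousMap.exists_pos_abs_le_of_eq_zero_on_snd {K : Set (ℝ × ℝ)} [CompactSpace K]
    (hK : ∀ x ∈ K, (x.1, (0 : ℝ)) ∈ K) (ψ : C(K, ℝ))
    (hψ : ∀ x : K, (x : ℝ × ℝ).2 = 0 → ψ x = 0) {δ : ℝ} (hδ : 0 < δ) :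
    ∃ η > 0, ∀ x : K, |(x : ℝ × ℝ).2| ≤ η → |ψ x| ≤ δ := by
  obtain ⟨η, hη, hψη⟩ := Metric.uniformContinuous_iff.mp
    (CompactSpace.uniformContinuous_of_continuous ψ.continuous) δ hδ
  refine ⟨η / 2, half_pos hη, fun x hx => ?_⟩
  set y : K := ⟨((x : ℝ × ℝ).1, 0), hK x x.2⟩
  have hxy : dist x y < η := by
    rw [Subtype.dist_eq, Prod.dist_eq, dist_self, Real.dist_eq, sub_zero,
      max_eq_right (abs_nonneg _)]
    linarith
  simpa [← Real.dist_eq, hψ y rfl] using (hψη hxy).le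

theorem C1Nhd.integrableOn_pd2 {u : ℝ × ℝ → ℝ} {s t : Set (ℝ × ℝ)} (hu : C1Nhd u s)
    (hts : t ⊆ s) (ht : Bornology.IsBounded t) : IntegrableOn (pd2 u) t := by
  obtain ⟨U, hU, hsU, hu⟩ := hu
  have hcont : ContinuousOn (pd2 u) U :=
    (hu.continuousOn_fderiv_of_isOpen hU le_rfl).clm_apply continuousOn_const
  exact ((hcont.mono ((closure_mono hts).trans hsU)).integrableOn_compact
    ht.isCompact_closure).mono_set subset_closure

theorem measurableSet_channels (a L α ε : ℝ) : MeasurableSet (Channels a L α ε) :=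
  .biUnion (Finset.range _).countable_toSet fun _ _ => measurableSet_Ioo.prod measurableSet_Icc

theorem isBounded_channels (a L α ε : ℝ) : Bornology.IsBounded (Channels a L α ε) :=
  (Bornology.isBounded_biUnion_finset _).2 fun _ _ =>
    (Metric.isBounded_Ioo _ _).prod (Metric.isBounded_Icc _ _)

theorem channels_subset_Icc_prod_Icc {a L α ε : ℝ} (hε : Admissible a ε)
    (hαε : α * ε ^ 2 ≤ 1) : Channels a L α ε ⊆ Icc 0 a ×ˢ Icc 0 (L * ε) := by
  obtain ⟨hε, N, rfl⟩ := hε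
  have hN : ⌊(N : ℝ) * ε / ε⌋₊ = N := by rw [mul_div_cancel_right₀ _ hε.ne', Nat.floor_natCast]
  intro x hx
  simp only [Channels, hN, mem_iUnion, Finset.mem_range] at hx
  obtain ⟨k, hk, ⟨hk1, hk2⟩, hx2⟩ := hx
  have hkN : (k : ℝ) + 1 ≤ N := by exact_mod_cast hk
  have hwidth : α * ε ^ 3 ≤ ε := by nlinarith
  refine ⟨⟨(by positivity : (0 : ℝ) ≤ k * ε).trans hk1.le, ?_⟩, hx2⟩
  nlinarith

theorem eventually_channels_subset {a L α : ℝ} {ε : ℕ → ℝ} (hadm : ∀ n, Admissible a (ε n))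
    (hεlim : Tendsto ε atTop (𝓝 0)) {η : ℝ} (hη : 0 < η) :
    ∀ᶠ n in atTop, Channels a L α (ε n) ⊆ Icc 0 a ×ˢ Icc 0 η := by
  have hαε : ∀ᶠ n in atTop, α * ε n ^ 2 < 1 :=
    (by simpa using (hεlim.pow 2).const_mul α : Tendsto (fun n => α * ε n ^ 2) atTop (𝓝 0))
      |>.eventually_lt_const one_pos
  have hLε : ∀ᶠ n in atTop, L * ε n < η :=
    (by simpa using hεlim.const_mul L : Tendsto (fun n => L * ε n) atTop (𝓝 0))
      |>.eventually_lt_const hη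
  filter_upwards [hαε, hLε] with n hn hn'
  exact (channels_subset_Icc_prod_Icc (hadm n) hn.le).trans
    (prod_mono le_rfl (Icc_subset_Icc_right hn'.le))

/-- The rescaled flux `j^ε` through the channels. -/
def channelFlux (a L α ε : ℝ) (u : ℝ × ℝ → ℝ) : ℝ × ℝ → ℝ :=
  (Channels a L α ε).indicator fun y => (1 / (L * ε ^ 2)) * pd2 u y

theorem integrable_channelFlux {a b L V α ε : ℝ} {u : ℝ × ℝ → ℝ}
    (hu : C1Nhd u (OmegaEps a b L V α ε)) : Integrable (channelFlux a L α ε u) :=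
  (integrable_indicator_iff (measurableSet_channels a L α ε)).2 <|
    (hu.integrableOn_pd2 subset_union_right (isBounded_channels a L α ε)).const_mul _

theorem integral_abs_channelFlux_le {a L α ε C : ℝ} {u : ℝ × ℝ → ℝ} (hL : 0 < L)
    (hflux : (1 / ε ^ 2) * ∫ x in Channels a L α ε, |pd2 u x| ≤ C) :
    ∫ x, |channelFlux a L α ε u x| ≤ C / L := by
  have hc : 0 ≤ 1 / (L * ε ^ 2) := by positivity
  simp_rw [channelFlux, ← Real.norm_eq_abs, norm_indicator_eq_indicator_norm, norm_mul,
    Real.norm_of_nonneg hc]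
  rw [integral_indicator (measurableSet_channels a L α ε), integral_const_mul]
  calc 1 / (L * ε ^ 2) * ∫ x in Channels a L α ε, ‖pd2 u x‖
      = (1 / ε ^ 2 * ∫ x in Channels a L α ε, |pd2 u x|) / L := by
        simp only [Real.norm_eq_abs]; field_simp
    _ ≤ C / L := by gcongr

theorem flux_measure_exists_general
    (a b L V α ω : ℝ) (hb : 0 < b) (hL : 0 < L) (hV : 0 < V)
    (f : ℝ × ℝ → ℝ)
    (ε : ℕ → ℝ) (hadm : ∀ n, Admissible a (ε n)) (hεlim : Tendsto ε atTop (𝓝 0))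
    (uu : ℕ → ℝ × ℝ → ℝ) (hsol : ∀ n, IsHelmholtzSol a b L V α ω (ε n) f (uu n))
    (C : ℝ)
    (hflux : ∀ n, (1 / (ε n) ^ 2) *
      ∫ x in Channels a L α (ε n), |pd2 (uu n) x| ≤ C) :
    ∃ σ : ℕ → ℕ, StrictMono σ ∧
      ∃ jstar : C(↥(Icc (0:ℝ) a ×ˢ Icc (-b) (L + V + 1)), ℝ) →ₗ[ℝ] ℝ,
        (∀ ψ : C(↥(Icc (0:ℝ) a ×ˢ Icc (-b) (L + V + 1)), ℝ),
          |jstar ψ| ≤ (C / L) * ⨆ x : ↥(Icc (0:ℝ) a ×ˢ Icc (-b) (L + V + 1)), |ψ x|) ∧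
        (∀ (φ : ℝ × ℝ → ℝ) (hφ : Continuous φ),
          Tendsto (fun n => ∫ x : ℝ × ℝ,
              (Channels a L α (ε (σ n))).indicator
                (fun y => (1 / (L * (ε (σ n)) ^ 2)) * pd2 (uu (σ n)) y) x * φ x)
            atTop
            (𝓝 (jstar (ContinuousMap.restrict (Icc (0:ℝ) a ×ˢ Icc (-b) (L + V + 1))
              ⟨φ, hφ⟩)))) ∧
        (∀ ψ : C(↥(Icc (0:ℝ) a ×ˢ Icc (-b) (L + V + 1)), ℝ),
          (∀ x : ↥(Icc (0:ℝ) a ×ˢ Icc (-b) (L + V + 1)), (x : ℝ × ℝ).2 = 0 → ψ x = 0) →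
          jstar ψ = 0) := by
  set K := Icc (0:ℝ) a ×ˢ Icc (-b) (L + V + 1)
  have : CompactSpace K := isCompact_iff_compactSpace.mp (isCompact_Icc.prod isCompact_Icc)
  have hKm : MeasurableSet K := measurableSet_Icc.prod measurableSet_Icc
  have hK0 : ∀ x ∈ K, (x.1, (0 : ℝ)) ∈ K := fun x hx => ⟨hx.1, by linarith, by linarith⟩
  set j := fun n => channelFlux a L α (ε n) (uu n)
  have hj (n : ℕ) : Integrable (j n) := integrable_channelFlux (hsol n).1
  have hjK (n : ℕ) : Integrable (fun x : K => j n x) (volume.comap ((↑) : K → ℝ × ℝ)) :=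
    (integrableOn_iff_comap_subtypeVal hKm).1 (hj n).integrableOn
  have hjC (n : ℕ) : ∫ x : K, |j n x| ∂volume.comap ((↑) : K → ℝ × ℝ) ≤ C / L :=
    (integral_abs_comap_subtypeVal_le hKm (hj n)).trans (integral_abs_channelFlux_le hL (hflux n))
  obtain ⟨J, hJ, σ, hσ, hlim⟩ := StrongDual.exists_strictMono_tendsto_apply_of_norm_le
    fun n => (hjK n).norm_integralMulCLM_le.trans (hjC n)
  refine ⟨σ, hσ, J, fun ψ => ?_, fun φ hφ => ?_, fun ψ hψ => ?_⟩
  · calc |J ψ| ≤ ‖J‖ * ‖ψ‖ := J.le_opNorm ψ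
      _ ≤ C / L * ‖ψ‖ := by gcongr
      _ = C / L * ⨆ x : K, |ψ x| := by rw [ContinuousMap.norm_eq_iSup_norm]; rfl
  · have hKη : ∀ᶠ n in atTop, Channels a L α (ε (σ n)) ⊆ K :=
      (hσ.tendsto_atTop.eventually (eventually_channels_subset hadm hεlim
        (by positivity : 0 < L + V + 1))).mono fun n hn =>
          hn.trans (prod_mono le_rfl (Icc_subset_Icc_left (by linarith)))
    refine (hlim _).congr' (hKη.mono fun n hn => ?_)
    exact ((hjK (σ n)).integralMulCLM_apply _).trans <| integral_comap_subtypeVal_of_support_subset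
      hKm ((Function.support_mul_subset_left _ _).trans (support_indicator_subset.trans hn))
  · refine tendsto_nhds_unique (hlim ψ) <| tendsto_integral_mul_of_abs_le_on_support
      (fun n => hjK (σ n)) (fun n => hjC (σ n)) fun δ hδ => ?_
    obtain ⟨η, hη, hψη⟩ := ψ.exists_pos_abs_le_of_eq_zero_on_snd hK0 hψ hδ
    filter_upwards [hσ.tendsto_atTop.eventually (eventually_channels_subset hadm hεlim hη)]
      with n hn x hx
    have hx2 := (hn (support_indicator_subset hx)).2
    exact hψη x (abs_le.2 ⟨by linarith [hx2.1], hx2.2⟩)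

/-- **Lemma 5 (Existence of a weak-* limit flux measure).** Along a subsequence, the
rescaled fluxes `j^ε = (1/(Lε²)) ∂₂u^ε 𝟏_{C_ε}` converge weakly-* to a continuous
linear functional `j_*` on `C(K,ℝ)` of norm at most `C/L`, supported on `[0,a]×{0}`. -/
theorem flux_measure_exists
    (a b L V α ω : ℝ) (ha : 0 < a) (hb : 0 < b) (hL : 0 < L) (hV : 0 < V)
    (hα : 0 < α) (hω : 0 < ω)
    (f : ℝ × ℝ → ℝ) (hf : MemLp f 2 volume) (hfsupp : Function.support f ⊆ Omega0 a b)
    (ε : ℕ → ℝ) (hadm : ∀ n, Admissible a (ε n)) (hεlim : Tendsto ε atTop (𝓝 0))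
    (uu : ℕ → ℝ × ℝ → ℝ) (hsol : ∀ n, IsHelmholtzSol a b L V α ω (ε n) f (uu n))
    (C : ℝ)
    (hflux : ∀ n, (1 / (ε n) ^ 2) *
      ∫ x in Channels a L α (ε n), |pd2 (uu n) x| ≤ C) :
    ∃ σ : ℕ → ℕ, StrictMono σ ∧
      ∃ jstar : C(↥(Icc (0:ℝ) a ×ˢ Icc (-b) (L + V + 1)), ℝ) →ₗ[ℝ] ℝ,
        (∀ ψ : C(↥(Icc (0:ℝ) a ×ˢ Icc (-b) (L + V + 1)), ℝ),
          |jstar ψ| ≤ (C / L) * ⨆ x : ↥(Icc (0:ℝ) a ×ˢ Icc (-b) (L + V + 1)), |ψ x|) ∧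
        (∀ (φ : ℝ × ℝ → ℝ) (hφ : Continuous φ),
          Tendsto (fun n => ∫ x : ℝ × ℝ,
              (Channels a L α (ε (σ n))).indicator
                (fun y => (1 / (L * (ε (σ n)) ^ 2)) * pd2 (uu (σ n)) y) x * φ x)
            atTop
            (𝓝 (jstar (ContinuousMap.restrict (Icc (0:ℝ) a ×ˢ Icc (-b) (L + V + 1))
              ⟨φ, hφ⟩)))) ∧
        (∀ ψ : C(↥(Icc (0:ℝ) a ×ˢ Icc (-b) (L + V + 1)), ℝ),
          (∀ x : ↥(Icc (0:ℝ) a ×ˢ Icc (-b) (L + V + 1)), (x : ℝ × ℝ).2 = 0 → ψ x = 0) →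
          jstar ψ = 0) :=
  flux_measure_exists_general a b L V α ω hb hL hV f ε hadm hεlim uu hsol C hflux
end
end

section
/- L² bound for the cell averages below the channels. Let 0 ≤ c < d ≤ a be fixed and let Y_U := (0,1)×(−1,0). Suppose the functions u^{ε_n} are C¹ on a neighborhood of the closure of Ω_{ε_n} and satisfy the uniform H¹ bound ∫_{Ω_{ε_n}} (|u^{ε_n}|² + |∇u^{ε_n}|²) ≤ M for all n. Define U^{ε}(y₁,y₂) := (1/|K_ε|) Σ_{k ∈ K_ε} u^{ε}(ε(k+y₁), ε y₂) for (y₁,y₂) ∈ Y_U, where |K_ε| denotes the cardinality of K_ε. Then the restrictions U^{ε_n}|_{Y_U} are uniformly bounded in L²(Y_U): there is a constant C, depending only on a, b, c, d and M, with ∫_{Y_U} |U^{ε_n}(y)|² dy ≤ C for all n. -/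
open MeasureTheory Set Filter Topology

noncomputable section

open Classical in
/-- Index set `K_ε = { k ∈ ℕ : kε ∈ [0, a−ε] and (kε, kε+ε) ∩ [c,d] ≠ ∅ }`. -/
def Kset (a c d ε : ℝ) : Finset ℕ :=
  (Finset.range (⌊a / ε⌋₊ + 1)).filter fun k =>
    (k : ℝ) * ε ∈ Icc 0 (a - ε) ∧
      (Ioo ((k : ℝ) * ε) ((k : ℝ) * ε + ε) ∩ Icc c d).Nonempty

/-- Cell average `U^ε(y) = (1/|K_ε|) Σ_{k ∈ K_ε} u^ε(ε(k+y₁), ε y₂)`. -/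
def Uav (a c d ε : ℝ) (uε : ℝ × ℝ → ℝ) (y : ℝ × ℝ) : ℝ :=
  (1 / ((Kset a c d ε).card : ℝ)) *
    ∑ k ∈ Kset a c d ε, uε (ε * ((k : ℝ) + y.1), ε * y.2)

/-- The lower bulk part `Y_U = (0,1) × (−1,0)` of the unit cell. -/
def Ybelow : Set (ℝ × ℝ) := Ioo (0:ℝ) 1 ×ˢ Ioo (-1:ℝ) 0

/-- The upper bulk part `Y_V = (0,1) × (L, L+V)` of the unit cell. -/
def Yabove (L V : ℝ) : Set (ℝ × ℝ) := Ioo (0:ℝ) 1 ×ˢ Ioo L (L + V)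

/-!
Along a vertical segment of `Ω₀`, the fundamental theorem of calculus applied to `u²` and an
average over the starting point give `u(x₁, x₂)² ≤ (1/b + 1) G(x₁)`, where `G(x₁)` is the
vertical energy `∫_{-b}^0 (u² + (∂₂u)²)(x₁, ·)`. Rescaling the `k`-th cell, this yields
`∫_{Y_U} u(ε(k + y₁), εy₂)² ≤ (1/b + 1) ε⁻¹ ∫_{kε}^{(k+1)ε} G`, and the cells are disjoint
in `(0, a)`, so by Jensen's inequality for the average `U^ε`
`∫_{Y_U} |U^ε|² ≤ (1/b + 1) (|K_ε| ε)⁻¹ ∫_{Ω₀} (u² + (∂₂u)²)`. Since `|K_ε| ≥ (d - c)/ε - 2`,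
the factor `(|K_ε| ε)⁻¹` is at most `2/(d - c)` once `4ε ≤ d - c`, which holds for all but
finitely many `n`.
-/

theorem sq_le_sq_add_integral_sq_add_sq_deriv {f f' : ℝ → ℝ} {s t x y : ℝ} (hst : s ≤ t)
    (hf : ∀ z ∈ Icc s t, HasDerivAt f (f' z) z) (hf' : ContinuousOn f' (Icc s t))
    (hx : x ∈ Icc s t) (hy : y ∈ Icc s t) :
    f x ^ 2 ≤ f y ^ 2 + ∫ z in s..t, (f z ^ 2 + f' z ^ 2) := by
  have hfc : ContinuousOn f (Icc s t) := fun z hz => (hf z hz).continuousAt.continuousWithinAt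
  have hEc : ContinuousOn (fun z => f z ^ 2 + f' z ^ 2) (Icc s t) := (hfc.pow 2).add (hf'.pow 2)
  have hsub : uIcc y x ⊆ Icc s t := uIcc_subset_Icc hy hx
  have hIoc : uIoc y x ⊆ Icc s t := uIoc_subset_uIcc.trans hsub
  have hftc : ∫ z in y..x, 2 * f z * f' z = f x ^ 2 - f y ^ 2 := by
    refine intervalIntegral.integral_eq_sub_of_hasDerivAt (f := fun z => f z ^ 2)
      (fun z hz => ?_) (((continuousOn_const.mul hfc).mul hf').mono hsub).intervalIntegrable
    simpa [mul_assoc, mul_comm, mul_left_comm] using (hf z (hsub hz)).fun_pow 2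
  -- `|(f ^ 2)'| = 2 |f f'| ≤ f ^ 2 + f' ^ 2`
  have hle : ∫ z in y..x, 2 * f z * f' z ≤ ∫ z in s..t, (f z ^ 2 + f' z ^ 2) := by
    calc ∫ z in y..x, 2 * f z * f' z
        ≤ ∫ z in uIoc y x, ‖2 * f z * f' z‖ :=
          (Real.le_norm_self _).trans intervalIntegral.norm_integral_le_integral_norm_uIoc
      _ ≤ ∫ z in uIoc y x, (f z ^ 2 + f' z ^ 2) := by
          refine setIntegral_mono_on ?_ ?_ measurableSet_uIoc fun z _ => ?_
          · exact (((continuousOn_const.mul hfc).mul hf').norm.integrableOn_Icc).mono_set hIoc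
          · exact hEc.integrableOn_Icc.mono_set hIoc
          · rw [Real.norm_eq_abs, abs_mul, abs_mul, abs_two]
            nlinarith [two_mul_le_add_sq |f z| |f' z|, sq_abs (f z), sq_abs (f' z)]
      _ ≤ ∫ z in Ioc s t, (f z ^ 2 + f' z ^ 2) := by
          refine setIntegral_mono_set ?_ (.of_forall fun z => by positivity) ?_
          · exact hEc.integrableOn_Icc.mono_set Ioc_subset_Icc_self
          · exact (Ioc_subset_Ioc (le_min hy.1 hx.1) (max_le hy.2 hx.2)).eventuallyLE
      _ = ∫ z in s..t, (f z ^ 2 + f' z ^ 2) := (intervalIntegral.integral_of_le hst).symm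
  linarith

theorem sq_le_integral_sq_add_sq_deriv {f f' : ℝ → ℝ} {s t x : ℝ} (hst : s < t)
    (hf : ∀ y ∈ Icc s t, HasDerivAt f (f' y) y) (hf' : ContinuousOn f' (Icc s t))
    (hx : x ∈ Icc s t) :
    f x ^ 2 ≤ (1 / (t - s) + 1) * ∫ y in s..t, (f y ^ 2 + f' y ^ 2) := by
  set J := ∫ y in s..t, (f y ^ 2 + f' y ^ 2)
  have hfc : ContinuousOn f (Icc s t) := fun y hy => (hf y hy).continuousAt.continuousWithinAt
  have hf2i : IntervalIntegrable (fun y => f y ^ 2) volume s t :=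
    (hfc.pow 2).intervalIntegrable_of_Icc hst.le
  have hfJ : ∫ y in s..t, f y ^ 2 ≤ J :=
    intervalIntegral.integral_mono_on hst.le hf2i
      (((hfc.pow 2).add (hf'.pow 2)).intervalIntegrable_of_Icc hst.le)
      fun y _ => le_add_of_nonneg_right (sq_nonneg _)
  -- average `f x ^ 2 ≤ f y ^ 2 + J` over `y ∈ [s, t]`
  have havg : (t - s) * f x ^ 2 ≤ J + (t - s) * J := by
    calc (t - s) * f x ^ 2 = ∫ _ in s..t, f x ^ 2 := by simp
      _ ≤ ∫ y in s..t, (f y ^ 2 + J) :=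
          intervalIntegral.integral_mono_on hst.le intervalIntegrable_const
            (hf2i.add intervalIntegrable_const) fun y hy =>
              sq_le_sq_add_integral_sq_add_sq_deriv hst.le hf hf' hx hy
      _ = (∫ y in s..t, f y ^ 2) + (t - s) * J := by
          rw [intervalIntegral.integral_add hf2i intervalIntegrable_const]
          simp
      _ ≤ J + (t - s) * J := by linarith
  have hts : t - s ≠ 0 := (sub_pos.2 hst).ne'
  rw [← le_div_iff₀' (sub_pos.2 hst)] at havg
  calc f x ^ 2 ≤ (J + (t - s) * J) / (t - s) := havg
    _ = (1 / (t - s) + 1) * J := by field_simp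

theorem DifferentiableAt.hasDerivAt_pd2 {u : ℝ × ℝ → ℝ} {x₁ y : ℝ}
    (hu : DifferentiableAt ℝ u (x₁, y)) : HasDerivAt (fun y => u (x₁, y)) (pd2 u (x₁, y)) y :=
  hu.hasFDerivAt.comp_hasDerivAt y ((hasDerivAt_const y x₁).prodMk (hasDerivAt_id y))

theorem ContDiffOn.continuousOn_fderiv_apply {u : ℝ × ℝ → ℝ} {U : Set (ℝ × ℝ)}
    (hu : ContDiffOn ℝ 1 u U) (hU : IsOpen U) (v : ℝ × ℝ) :
    ContinuousOn (fun x => fderiv ℝ u x v) U :=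
  (hu.continuousOn_fderiv_of_isOpen hU le_rfl).clm_apply continuousOn_const

def verticalEnergy (b : ℝ) (u : ℝ × ℝ → ℝ) (x₁ : ℝ) : ℝ :=
  ∫ y in -b..0, (u (x₁, y) ^ 2 + pd2 u (x₁, y) ^ 2)

theorem sq_le_verticalEnergy {u : ℝ × ℝ → ℝ} {U : Set (ℝ × ℝ)} (hU : IsOpen U)
    (hu : ContDiffOn ℝ 1 u U) {b x₁ x₂ : ℝ} (hb : 0 < b)
    (hseg : ∀ y ∈ Icc (-b) 0, (x₁, y) ∈ U) (hx₂ : x₂ ∈ Icc (-b) 0) :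
    u (x₁, x₂) ^ 2 ≤ (1 / b + 1) * verticalEnergy b u x₁ := by
  have h := sq_le_integral_sq_add_sq_deriv (f := fun y => u (x₁, y))
    (f' := fun y => pd2 u (x₁, y)) (neg_lt_zero.2 hb)
    (fun y hy => ((hu.differentiableOn one_ne_zero).differentiableAt
      (hU.mem_nhds (hseg y hy))).hasDerivAt_pd2)
    ((hu.continuousOn_fderiv_apply hU _).comp (by fun_prop) hseg) hx₂
  simpa [verticalEnergy] using h

theorem integrableOn_intervalIntegral_of_continuousOn {F : ℝ × ℝ → ℝ} {s t p q : ℝ}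
    (hpq : p ≤ q) (hF : ContinuousOn F (Icc s t ×ˢ Icc p q)) :
    IntegrableOn (fun x => ∫ y in p..q, F (x, y)) (Icc s t) := by
  have hFi : Integrable F ((volume.restrict (Icc s t)).prod (volume.restrict (Ioc p q))) := by
    rw [Measure.prod_restrict]
    exact (hF.integrableOn_compact (isCompact_Icc.prod isCompact_Icc)).mono_set
      (prod_mono subset_rfl Ioc_subset_Icc_self)
  simp only [intervalIntegral.integral_of_le hpq]
  exact hFi.integral_prod_left

theorem setIntegral_Ioo_prod_Ioo_eq_intervalIntegral {F : ℝ × ℝ → ℝ} {s t p q : ℝ}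
    (hst : s ≤ t) (hpq : p ≤ q) (hF : IntegrableOn F (Ioo s t ×ˢ Ioo p q)) :
    ∫ z in Ioo s t ×ˢ Ioo p q, F z = ∫ x in s..t, ∫ y in p..q, F (x, y) := by
  simp only [intervalIntegral.integral_of_le hst, intervalIntegral.integral_of_le hpq,
    integral_Ioc_eq_integral_Ioo]
  exact setIntegral_prod F hF

theorem volume_restrict_Ybelow : volume.restrict Ybelow =
    (volume.restrict (Ioo (0:ℝ) 1)).prod (volume.restrict (Ioo (-1:ℝ) 0)) := by
  rw [Ybelow, Measure.volume_eq_prod, Measure.prod_restrict]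

theorem setIntegral_Ybelow_comp_fst (g : ℝ → ℝ) :
    ∫ y in Ybelow, g y.1 = ∫ t in (0:ℝ)..1, g t := by
  rw [volume_restrict_Ybelow, integral_fun_fst, intervalIntegral.integral_of_le zero_le_one,
    integral_Ioc_eq_integral_Ioo]
  simp

theorem mul_add_mem_Icc {a ε k t : ℝ} (hε : 0 < ε) (hk0 : 0 ≤ k) (hka : (k + 1) * ε ≤ a)
    (ht : t ∈ Icc (0:ℝ) 1) : ε * (k + t) ∈ Icc 0 a :=
  ⟨by have := ht.1; positivity, by nlinarith [ht.2]⟩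

theorem integrableOn_Ybelow_sq_cell {u : ℝ × ℝ → ℝ} {U : Set (ℝ × ℝ)} (hu : ContinuousOn u U)
    {a b ε k : ℝ} (hR : Icc 0 a ×ˢ Icc (-b) 0 ⊆ U) (hε : 0 < ε) (hεb : ε ≤ b) (hk0 : 0 ≤ k)
    (hka : (k + 1) * ε ≤ a) :
    IntegrableOn (fun y : ℝ × ℝ => u (ε * (k + y.1), ε * y.2) ^ 2) Ybelow := by
  have hmaps : MapsTo (fun y : ℝ × ℝ => (ε * (k + y.1), ε * y.2)) (Icc 0 1 ×ˢ Icc (-1) 0) U :=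
    fun y hy => hR ⟨mul_add_mem_Icc hε hk0 hka hy.1, by nlinarith [hy.2.1], by nlinarith [hy.2.2]⟩
  exact ((hu.comp (by fun_prop) hmaps).pow 2).integrableOn_compact
    (isCompact_Icc.prod isCompact_Icc) |>.mono_set
      (prod_mono Ioo_subset_Icc_self Ioo_subset_Icc_self)

theorem integral_sq_cell_le {u : ℝ × ℝ → ℝ} {U : Set (ℝ × ℝ)} (hU : IsOpen U)
    (hu : ContDiffOn ℝ 1 u U) {a b ε k : ℝ} (hb : 0 < b) (hR : Icc 0 a ×ˢ Icc (-b) 0 ⊆ U)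
    (hε : 0 < ε) (hεb : ε ≤ b) (hk0 : 0 ≤ k) (hka : (k + 1) * ε ≤ a) :
    ∫ y in Ybelow, u (ε * (k + y.1), ε * y.2) ^ 2
      ≤ (1 / b + 1) * ε⁻¹ * ∫ x₁ in k * ε..(k + 1) * ε, verticalEnergy b u x₁ := by
  have htrace : ∀ y ∈ Ybelow, u (ε * (k + y.1), ε * y.2) ^ 2
      ≤ (1 / b + 1) * verticalEnergy b u (ε * (k + y.1)) := fun y hy =>
    sq_le_verticalEnergy hU hu hb
      (fun s hs => hR ⟨mul_add_mem_Icc hε hk0 hka (Ioo_subset_Icc_self hy.1), hs⟩) ⟨by nlinarith [hy.2.1], by nlinarith [hy.2.2]⟩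
  have hGi : IntegrableOn (fun t => verticalEnergy b u (ε * (k + t))) (Icc 0 1) := by
    refine integrableOn_intervalIntegral_of_continuousOn (neg_nonpos.2 hb.le)
      (F := fun z => u (ε * (k + z.1), z.2) ^ 2 + pd2 u (ε * (k + z.1), z.2) ^ 2) ?_
    have hmaps : MapsTo (fun z : ℝ × ℝ => (ε * (k + z.1), z.2)) (Icc 0 1 ×ˢ Icc (-b) 0) U :=
      fun z hz => hR ⟨mul_add_mem_Icc hε hk0 hka hz.1, hz.2⟩
    exact ((hu.continuousOn.comp (by fun_prop) hmaps).pow 2).add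
      (((hu.continuousOn_fderiv_apply hU _).comp (by fun_prop) hmaps).pow 2)
  have hGYi : IntegrableOn (fun y : ℝ × ℝ => verticalEnergy b u (ε * (k + y.1))) Ybelow := by
    rw [IntegrableOn, volume_restrict_Ybelow]
    exact (hGi.mono_set Ioo_subset_Icc_self).comp_fst _
  calc ∫ y in Ybelow, u (ε * (k + y.1), ε * y.2) ^ 2
      ≤ ∫ y in Ybelow, (1 / b + 1) * verticalEnergy b u (ε * (k + y.1)) :=
        integral_mono_of_nonneg (.of_forall fun _ => sq_nonneg _) (hGYi.const_mul _)
          ((ae_restrict_iff' (measurableSet_Ioo.prod measurableSet_Ioo)).2 (.of_forall htrace))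
    _ = (1 / b + 1) * ∫ t in (0:ℝ)..1, verticalEnergy b u (ε * t + k * ε) := by
        rw [integral_const_mul,
          setIntegral_Ybelow_comp_fst fun t => verticalEnergy b u (ε * (k + t))]
        ring_nf
    _ = (1 / b + 1) * ε⁻¹ * ∫ x₁ in k * ε..(k + 1) * ε, verticalEnergy b u x₁ := by
        rw [intervalIntegral.integral_comp_mul_add _ hε.ne', smul_eq_mul, mul_assoc]
        ring_nf

theorem sum_intervalIntegral_cells_le {G : ℝ → ℝ} {a ε : ℝ} {s : Finset ℕ} (ha : 0 ≤ a)
    (hε : 0 < ε) (hG : ∀ x ∈ Icc 0 a, 0 ≤ G x) (hGi : IntegrableOn G (Icc 0 a))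
    (hs : ∀ k ∈ s, ((k : ℝ) + 1) * ε ≤ a) :
    ∑ k ∈ s, ∫ x in (k : ℝ) * ε..(k + 1) * ε, G x ≤ ∫ x in 0..a, G x := by
  set N := ⌊a / ε⌋₊
  have hNa : (N : ℝ) * ε ≤ a := (le_div_iff₀ hε).1 (Nat.floor_le (div_nonneg ha hε.le))
  have hcell : ∀ k < N, Icc ((k : ℝ) * ε) ((k + 1) * ε) ⊆ Icc 0 a := fun k hk =>
    Icc_subset_Icc (by positivity) (le_trans (by gcongr; exact_mod_cast hk) hNa)
  have hsN : s ⊆ Finset.range N := fun k hk => Finset.mem_range.2 <| by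
    have : ((k + 1 : ℕ) : ℝ) ≤ a / ε := by push_cast; exact (le_div_iff₀ hε).2 (hs k hk)
    have := Nat.le_floor this
    omega
  calc ∑ k ∈ s, ∫ x in (k : ℝ) * ε..(k + 1) * ε, G x
      ≤ ∑ k ∈ Finset.range N, ∫ x in (k : ℝ) * ε..(k + 1) * ε, G x := by
        refine Finset.sum_le_sum_of_subset_of_nonneg hsN fun k hk _ => ?_
        exact intervalIntegral.integral_nonneg (by gcongr; linarith) fun x hx =>
          hG x (hcell k (Finset.mem_range.1 hk) hx)
    _ = ∫ x in (0 : ℝ)..N * ε, G x := by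
        have := intervalIntegral.sum_integral_adjacent_intervals (f := G) (μ := volume)
          (a := fun k : ℕ => (k : ℝ) * ε) (n := N) fun k hk =>
            (intervalIntegrable_iff_integrableOn_Icc_of_le (by gcongr; linarith)).2
              (hGi.mono_set (by simpa using hcell k hk))
        simpa using this
    _ ≤ ∫ x in 0..a, G x :=
        intervalIntegral.integral_mono_interval le_rfl (by positivity) hNa
          ((ae_restrict_iff' measurableSet_Ioc).2 (.of_forall fun x hx =>
            hG x (Ioc_subset_Icc_self hx)))
          ((intervalIntegrable_iff_integrableOn_Icc_of_le ha).2 hGi)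

theorem add_one_mul_le_of_mem_Kset {a c d ε : ℝ} {k : ℕ} (hk : k ∈ Kset a c d ε) :
    ((k : ℝ) + 1) * ε ≤ a := by
  classical
  rw [Kset, Finset.mem_filter] at hk
  have := hk.2.1.2
  linarith

theorem Ico_ceil_floor_subset_Kset {a c d ε : ℝ} (hε : 0 < ε) (hd : d ≤ a) :
    Finset.Ico ⌈c / ε⌉₊ ⌊d / ε⌋₊ ⊆ Kset a c d ε := by
  classical
  intro k hk
  rw [Finset.mem_Ico] at hk
  have hck : c ≤ k * ε := (div_le_iff₀ hε).1 ((Nat.le_ceil _).trans (by exact_mod_cast hk.1))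
  have hkd : (k + 1) * ε ≤ d := by
    have : ((k + 1 : ℕ) : ℝ) ≤ d / ε := (Nat.le_floor_iff' k.succ_ne_zero).1 hk.2
    push_cast at this
    exact (le_div_iff₀ hε).1 this
  rw [Kset, Finset.mem_filter]
  refine ⟨Finset.mem_range.2 (Nat.lt_succ_of_le (Nat.le_floor ?_)),
    ⟨by positivity, by linarith⟩, k * ε + ε / 2, ⟨by linarith, by linarith⟩, by linarith,
      by linarith⟩
  exact (le_div_iff₀ hε).2 (by nlinarith)

theorem card_Kset_ge {a c d ε : ℝ} (hε : 0 < ε) (hc : 0 ≤ c) (hd : d ≤ a) :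
    (d - c) / ε - 2 ≤ (Kset a c d ε).card := by
  have hk₀ : (⌈c / ε⌉₊ : ℝ) < c / ε + 1 := Nat.ceil_lt_add_one (div_nonneg hc hε.le)
  have hk₁ : d / ε - 1 < ⌊d / ε⌋₊ := Nat.sub_one_lt_floor _
  calc (d - c) / ε - 2 ≤ (⌊d / ε⌋₊ : ℝ) - ⌈c / ε⌉₊ := by rw [sub_div]; linarith
    _ ≤ ((⌊d / ε⌋₊ - ⌈c / ε⌉₊ : ℕ) : ℝ) := by
        rcases le_total ⌈c / ε⌉₊ ⌊d / ε⌋₊ with h | h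
        · rw [Nat.cast_sub h]
        · rw [Nat.sub_eq_zero_of_le h]; simpa using h
    _ ≤ (Kset a c d ε).card := by
        rw [← Nat.card_Ico]
        exact_mod_cast Finset.card_le_card (Ico_ceil_floor_subset_Kset hε hd)

theorem isBounded_OmegaEps (a b L V α ε : ℝ) : Bornology.IsBounded (OmegaEps a b L V α ε) :=
  (((Metric.isBounded_Ioo _ _).prod (Metric.isBounded_Ioo _ _)).union
    ((Metric.isBounded_Ioo _ _).prod (Metric.isBounded_Ioo _ _))).union
    ((Bornology.isBounded_biUnion_finset _).2 fun _ _ =>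
      (Metric.isBounded_Ioo _ _).prod (Metric.isBounded_Icc _ _))

theorem Omega0_subset_OmegaEps (a b L V α ε : ℝ) : Omega0 a b ⊆ OmegaEps a b L V α ε :=
  subset_union_left.trans subset_union_left

theorem integral_Omega0_le_energy {u : ℝ × ℝ → ℝ} {U : Set (ℝ × ℝ)} (hU : IsOpen U)
    (hu : ContDiffOn ℝ 1 u U) {a b L V α ε : ℝ} (hΩU : closure (OmegaEps a b L V α ε) ⊆ U) :
    ∫ x in Omega0 a b, (u x ^ 2 + pd2 u x ^ 2)
      ≤ ∫ x in OmegaEps a b L V α ε, (u x ^ 2 + dot (grad u x) (grad u x)) := by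
  have hΩ0 := Omega0_subset_OmegaEps a b L V α ε
  have hint : ∀ {g : ℝ × ℝ → ℝ}, ContinuousOn g U → IntegrableOn g (OmegaEps a b L V α ε) :=
    fun hg => ((hg.mono hΩU).integrableOn_compact
      (isBounded_OmegaEps a b L V α ε).isCompact_closure).mono_set subset_closure
  have hF : ContinuousOn (fun x => u x ^ 2 + pd2 u x ^ 2) U :=
    (hu.continuousOn.pow 2).add ((hu.continuousOn_fderiv_apply hU _).pow 2)
  have hW : ContinuousOn (fun x => u x ^ 2 + dot (grad u x) (grad u x)) U :=
    (hu.continuousOn.pow 2).add (((hu.continuousOn_fderiv_apply hU _).mul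
      (hu.continuousOn_fderiv_apply hU _)).add
        ((hu.continuousOn_fderiv_apply hU _).mul (hu.continuousOn_fderiv_apply hU _)))
  calc ∫ x in Omega0 a b, (u x ^ 2 + pd2 u x ^ 2)
      ≤ ∫ x in Omega0 a b, (u x ^ 2 + dot (grad u x) (grad u x)) :=
        setIntegral_mono_on ((hint hF).mono_set hΩ0) ((hint hW).mono_set hΩ0)
          (measurableSet_Ioo.prod measurableSet_Ioo) fun x _ => by
            simp only [dot, grad]; nlinarith [sq_nonneg (pd1 u x)]
    _ ≤ ∫ x in OmegaEps a b L V α ε, (u x ^ 2 + dot (grad u x) (grad u x)) :=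
        setIntegral_mono_set (hint hW) (.of_forall fun _ =>
          add_nonneg (sq_nonneg _) (add_nonneg (mul_self_nonneg _) (mul_self_nonneg _)))
          hΩ0.eventuallyLE

theorem integral_sq_average_le {X ι : Type*} [MeasurableSpace X] {μ : Measure X}
    (s : Finset ι) (f : ι → X → ℝ) (hf : ∀ i ∈ s, Integrable (fun x => f i x ^ 2) μ) :
    ∫ x, (1 / s.card * ∑ i ∈ s, f i x) ^ 2 ∂μ ≤ 1 / s.card * ∑ i ∈ s, ∫ x, f i x ^ 2 ∂μ := by
  rw [← integral_finsetSum s hf, ← integral_const_mul]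
  refine integral_mono_of_nonneg (.of_forall fun _ => sq_nonneg _)
    ((integrable_finsetSum s hf).const_mul _) (.of_forall fun x => ?_)
  simpa only [one_div_mul_eq_div] using sum_div_card_sq_le_sum_sq_div_card

theorem sum_integral_sq_cells_le {u : ℝ × ℝ → ℝ} {U : Set (ℝ × ℝ)} (hU : IsOpen U)
    (hu : ContDiffOn ℝ 1 u U) {a b c d ε : ℝ} (ha : 0 ≤ a) (hb : 0 < b)
    (hR : Icc 0 a ×ˢ Icc (-b) 0 ⊆ U) (hε : 0 < ε) (hεb : ε ≤ b) :
    ∑ k ∈ Kset a c d ε, ∫ y in Ybelow, u (ε * (k + y.1), ε * y.2) ^ 2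
      ≤ (1 / b + 1) * ε⁻¹ * ∫ x in Omega0 a b, (u x ^ 2 + pd2 u x ^ 2) := by
  have hF : ContinuousOn (fun x => u x ^ 2 + pd2 u x ^ 2) (Icc 0 a ×ˢ Icc (-b) 0) :=
    ((hu.continuousOn.pow 2).add ((hu.continuousOn_fderiv_apply hU _).pow 2)).mono hR
  have hGi : IntegrableOn (verticalEnergy b u) (Icc 0 a) :=
    integrableOn_intervalIntegral_of_continuousOn (neg_nonpos.2 hb.le) hF
  have hGE : ∫ x in 0..a, verticalEnergy b u x = ∫ x in Omega0 a b, (u x ^ 2 + pd2 u x ^ 2) :=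
    (setIntegral_Ioo_prod_Ioo_eq_intervalIntegral ha (neg_nonpos.2 hb.le)
      (hF.integrableOn_compact (isCompact_Icc.prod isCompact_Icc) |>.mono_set
        (prod_mono Ioo_subset_Icc_self Ioo_subset_Icc_self))).symm
  calc ∑ k ∈ Kset a c d ε, ∫ y in Ybelow, u (ε * (k + y.1), ε * y.2) ^ 2
      ≤ ∑ k ∈ Kset a c d ε,
          (1 / b + 1) * ε⁻¹ * ∫ x in (k : ℝ) * ε..(k + 1) * ε, verticalEnergy b u x :=
        Finset.sum_le_sum fun k hk => integral_sq_cell_le hU hu hb hR hε hεb k.cast_nonneg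
          (add_one_mul_le_of_mem_Kset hk)
    _ ≤ (1 / b + 1) * ε⁻¹ * ∫ x in Omega0 a b, (u x ^ 2 + pd2 u x ^ 2) := by
        rw [← Finset.mul_sum, ← hGE]
        gcongr
        exact sum_intervalIntegral_cells_le ha hε
          (fun x _ => intervalIntegral.integral_nonneg (neg_nonpos.2 hb.le)
            fun _ _ => by positivity) hGi fun k hk => add_one_mul_le_of_mem_Kset hk

theorem integral_sq_Uav_le {a b L V α c d ε M : ℝ} {u : ℝ × ℝ → ℝ} (hb : 0 < b) (hc : 0 ≤ c)
    (hcd : c < d) (hd : d ≤ a) (hε : 0 < ε) (hεb : ε ≤ b) (hεcd : 4 * ε ≤ d - c)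
    (hu : C1Nhd u (OmegaEps a b L V α ε))
    (hM : ∫ x in OmegaEps a b L V α ε, (u x ^ 2 + dot (grad u x) (grad u x)) ≤ M) :
    ∫ y in Ybelow, Uav a c d ε u y ^ 2 ≤ (1 / b + 1) * (2 / (d - c)) * M := by
  obtain ⟨U, hU, hΩU, huU⟩ := hu
  have ha : 0 < a := by linarith
  have hR : Icc 0 a ×ˢ Icc (-b) 0 ⊆ U := by
    rw [← closure_Ioo ha.ne, ← closure_Ioo (neg_lt_zero.2 hb).ne, ← closure_prod_eq]
    exact (closure_mono (Omega0_subset_OmegaEps a b L V α ε)).trans hΩU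
  set K := Kset a c d ε
  set E := ∫ x in Omega0 a b, (u x ^ 2 + pd2 u x ^ 2)
  have hE : 0 ≤ E := setIntegral_nonneg (measurableSet_Ioo.prod measurableSet_Ioo)
    fun _ _ => by positivity
  have hEM : E ≤ M := (integral_Omega0_le_energy hU huU hΩU).trans hM
  have hcard : (d - c) / 2 ≤ K.card * ε := by
    have := card_Kset_ge hε hc hd (a := a)
    rw [sub_le_iff_le_add, div_le_iff₀ hε] at this
    linarith
  have hinv : (K.card * ε)⁻¹ ≤ 2 / (d - c) := by
    rw [← inv_div]
    exact inv_anti₀ (by linarith) hcard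
  have havg : ∫ y in Ybelow, Uav a c d ε u y ^ 2
      ≤ 1 / K.card * ∑ k ∈ K, ∫ y in Ybelow, u (ε * (k + y.1), ε * y.2) ^ 2 := by
    unfold Uav
    exact integral_sq_average_le K _ fun k hk => integrableOn_Ybelow_sq_cell huU.continuousOn
      hR hε hεb k.cast_nonneg (add_one_mul_le_of_mem_Kset hk)
  calc ∫ y in Ybelow, Uav a c d ε u y ^ 2
      ≤ 1 / K.card * ((1 / b + 1) * ε⁻¹ * E) :=
        havg.trans (by gcongr; exact sum_integral_sq_cells_le hU huU ha.le hb hR hε hεb)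
    _ = (1 / b + 1) * (K.card * ε)⁻¹ * E := by rw [mul_inv]; ring
    _ ≤ (1 / b + 1) * (2 / (d - c)) * M := by gcongr

theorem cell_average_L2_bound_below_general
    (a b L V α : ℝ) (hb : 0 < b)
    (c d : ℝ) (hc : 0 ≤ c) (hcd : c < d) (hd : d ≤ a)
    (ε : ℕ → ℝ) (hadm : ∀ n, Admissible a (ε n)) (hεlim : Tendsto ε atTop (𝓝 0))
    (uu : ℕ → ℝ × ℝ → ℝ)
    (hreg : ∀ n, C1Nhd (uu n) (OmegaEps a b L V α (ε n)))
    (M : ℝ)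
    (hbdd : ∀ n, ∫ x in OmegaEps a b L V α (ε n),
      ((uu n x) ^ 2 + dot (grad (uu n) x) (grad (uu n) x)) ≤ M) :
    ∃ C : ℝ, ∀ n, ∫ y in Ybelow, (Uav a c d (ε n) (uu n) y) ^ 2 ≤ C := by
  have hsmall : ∀ᶠ n in atTop, ε n ≤ b ∧ ε n ≤ (d - c) / 4 :=
    (hεlim.eventually (eventually_le_nhds hb)).and
      (hεlim.eventually (eventually_le_nhds (by linarith)))
  have hbound : ∀ᶠ n in atTop,
      ∫ y in Ybelow, (Uav a c d (ε n) (uu n) y) ^ 2 ≤ (1 / b + 1) * (2 / (d - c)) * M :=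
    hsmall.mono fun n hn => integral_sq_Uav_le hb hc hcd hd (hadm n).1 hn.1 (by linarith [hn.2])
      (hreg n) (hbdd n)
  obtain ⟨C, hC⟩ := (isBoundedUnder_of_eventually_le hbound).bddAbove_range
  exact ⟨C, fun n => hC (mem_range_self n)⟩

/-- **L² bound for the cell averages below the channels.** -/
theorem cell_average_L2_bound_below
    (a b L V α : ℝ) (ha : 0 < a) (hb : 0 < b) (hL : 0 < L) (hV : 0 < V) (hα : 0 < α)
    (c d : ℝ) (hc : 0 ≤ c) (hcd : c < d) (hd : d ≤ a)
    (ε : ℕ → ℝ) (hadm : ∀ n, Admissible a (ε n)) (hεlim : Tendsto ε atTop (𝓝 0))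
    (uu : ℕ → ℝ × ℝ → ℝ)
    (hreg : ∀ n, C1Nhd (uu n) (OmegaEps a b L V α (ε n)))
    (M : ℝ)
    (hbdd : ∀ n, ∫ x in OmegaEps a b L V α (ε n),
      ((uu n x) ^ 2 + dot (grad (uu n) x) (grad (uu n) x)) ≤ M) :
    ∃ C : ℝ, ∀ n, ∫ y in Ybelow, (Uav a c d (ε n) (uu n) y) ^ 2 ≤ C :=
  cell_average_L2_bound_below_general a b L V α hb c d hc hcd hd ε hadm hεlim uu hreg M hbdd
end
end

section
/- Identification of the boundary trace by thin-strip averages. Let 0 ≤ c < d ≤ a. Suppose the functions u^{ε_n} are C¹ on a neighborhood of the closure of Ω₀ = (0,a)×(−b,0), satisfy the uniform bound ∫_{Ω₀} (|u^{ε_n}|² + |∇u^{ε_n}|²) ≤ M for all n, and converge weakly in H¹(Ω₀) to a function u that is C¹ on a neighborhood of the closure of Ω₀ (that is, ∫_{Ω₀} u^{ε_n} φ → ∫_{Ω₀} u φ and ∫_{Ω₀} ∇u^{ε_n}·Φ → ∫_{Ω₀} ∇u·Φ for all continuous φ : ℝ² → ℝ and Φ : ℝ² → ℝ²). Then the averages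 of u^{ε_n} over the thin strip of height ε_n below the upper boundary converge to the boundary trace of u: (1/ε_n) ∫_c^d ∫_{−ε_n}^0 u^{ε_n}(x₁,x₂) dx₂ dx₁ → ∫_c^d u(x₁, 0) dx₁ as n → ∞. -/
/-!
Integrating `∂ₜ((t + h) v(x₁, t))` over `t ∈ [-h, 0]` and then over `x₁ ∈ (c, d)` gives the trace
identity `h ∫_c^d v(x₁, 0) dx₁ = ∫_{(c,d)×(-h,0)} (v + (x₂ + h) ∂₂v)`.

With `h = b` it writes the trace of `u^{ε_n}` as the pairing of `u^{ε_n}` and `∂₂u^{ε_n}` with two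
fixed `L²(Ω₀)` functions. Bounded continuous functions are dense in `L²(Ω₀)` and the sequence is
bounded in `H¹(Ω₀)`, so the weak convergence extends to these pairings: the traces converge.

With `h = ε_n` it shows that the strip average differs from the trace of `u^{ε_n}` by
`ε_n⁻¹ ∫ (x₂ + ε_n) ∂₂u^{ε_n}` over the strip, which Cauchy–Schwarz bounds by
`√(M (d - c) ε_n / 3)`.
-/

open MeasureTheory Set Filter Topology

noncomputable section

open scoped BoundedContinuousFunction

section L2
variable {X : Type*} [MeasurableSpace X] {μ : Measure X} {f g : X → ℝ}

theorem MeasureTheory.L2.inner_eq_integral_mul {F G : Lp ℝ 2 μ} (hF : F =ᵐ[μ] f)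
    (hG : G =ᵐ[μ] g) : inner ℝ F G = ∫ x, f x * g x ∂μ := by
  rw [L2.inner_def]
  refine integral_congr_ae ?_
  filter_upwards [hF, hG] with x hfx hgx
  simp [hfx, hgx, mul_comm]

theorem MeasureTheory.MemLp.norm_toLp_sq (hf : MemLp f 2 μ) :
    ‖hf.toLp f‖ ^ 2 = ∫ x, f x ^ 2 ∂μ := by
  rw [← real_inner_self_eq_norm_sq, L2.inner_eq_integral_mul hf.coeFn_toLp hf.coeFn_toLp]
  simp [sq]

theorem MeasureTheory.MemLp.abs_integral_mul_le (hf : MemLp f 2 μ) (hg : MemLp g 2 μ) :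
    |∫ x, f x * g x ∂μ| ≤ √(∫ x, f x ^ 2 ∂μ) * √(∫ x, g x ^ 2 ∂μ) := by
  rw [← L2.inner_eq_integral_mul hf.coeFn_toLp hg.coeFn_toLp, ← hf.norm_toLp_sq,
    ← hg.norm_toLp_sq, Real.sqrt_sq (norm_nonneg _), Real.sqrt_sq (norm_nonneg _)]
  exact abs_real_inner_le_norm _ _

end L2

theorem tendsto_inner_of_denseRange {E F ι : Type*} [NormedAddCommGroup E]
    [InnerProductSpace ℝ E] {T : F → E} (hT : DenseRange T) {l : Filter ι} {x : ι → E}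
    {C : ℝ} (hC : ∀ i, ‖x i‖ ≤ C) {x₀ : E}
    (h : ∀ z, Tendsto (fun i => inner ℝ (x i) (T z)) l (𝓝 (inner ℝ x₀ (T z)))) (y : E) :
    Tendsto (fun i => inner ℝ (x i) y) l (𝓝 (inner ℝ x₀ y)) := by
  have hequi : Equicontinuous (fun i (y : E) => inner ℝ (x i) y) := by
    refine (LipschitzWith.uniformEquicontinuous _ C.toNNReal fun i => ?_).equicontinuous
    exact LipschitzWith.of_dist_le_mul fun y y' => by
      rw [dist_eq_norm, dist_eq_norm, ← inner_sub_right]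
      exact (norm_inner_le_norm _ _).trans
        (by gcongr; exact (hC i).trans (Real.le_coe_toNNReal C))
  have hclosed : IsClosed {y | Tendsto (fun i => inner ℝ (x i) y) l (𝓝 (inner ℝ x₀ y))} :=
    hequi.isClosed_setOfPred_tendsto (continuous_const.inner continuous_id)
  exact hclosed.closure_subset_iff.2 (range_subset_iff.2 h) (hT.closure_range ▸ mem_univ y)

theorem tendsto_integral_mul_of_forall_boundedContinuous {X ι : Type*} [TopologicalSpace X]
    [NormalSpace X] [MeasurableSpace X] [BorelSpace X] {μ : Measure X} [IsFiniteMeasure μ]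
    [μ.WeaklyRegular] {l : Filter ι} {g : ι → X → ℝ} {G : X → ℝ} {C : ℝ}
    (hg : ∀ i, MemLp (g i) 2 μ) (hG : MemLp G 2 μ) (hC : ∀ i, ∫ x, g i x ^ 2 ∂μ ≤ C)
    (hw : ∀ φ : X →ᵇ ℝ,
      Tendsto (fun i => ∫ x, g i x * φ x ∂μ) l (𝓝 (∫ x, G x * φ x ∂μ)))
    {h : X → ℝ} (hh : MemLp h 2 μ) :
    Tendsto (fun i => ∫ x, g i x * h x ∂μ) l (𝓝 (∫ x, G x * h x ∂μ)) := by
  have hnorm (i : ι) : ‖(hg i).toLp (g i)‖ ≤ √C := by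
    rw [← Real.sqrt_sq (norm_nonneg _), (hg i).norm_toLp_sq]
    exact Real.sqrt_le_sqrt (hC i)
  have key := tendsto_inner_of_denseRange (BoundedContinuousFunction.toLp_denseRange ℝ μ ℝ
    (p := 2) ENNReal.ofNat_ne_top) hnorm (x₀ := hG.toLp G) (l := l) (fun φ => ?_) (hh.toLp h)
  · simpa only [L2.inner_eq_integral_mul (hg _).coeFn_toLp hh.coeFn_toLp,
      L2.inner_eq_integral_mul hG.coeFn_toLp hh.coeFn_toLp] using key
  · simpa only [L2.inner_eq_integral_mul (hg _).coeFn_toLp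
      (BoundedContinuousFunction.coeFn_toLp 2 μ ℝ φ),
      L2.inner_eq_integral_mul hG.coeFn_toLp (BoundedContinuousFunction.coeFn_toLp 2 μ ℝ φ)]
      using hw φ

theorem ContinuousOn.memLp_restrict {X : Type*} [TopologicalSpace X] [MeasurableSpace X]
    [OpensMeasurableSpace X] [SecondCountableTopologyEither X ℝ] {μ : Measure X}
    [IsFiniteMeasureOnCompacts μ] {f : X → ℝ} {K s : Set X} (hf : ContinuousOn f K)
    (hK : IsCompact K) (hsK : s ⊆ K) (hs : MeasurableSet s) (p : ENNReal) :
    MemLp f p (μ.restrict s) := by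
  have : IsFiniteMeasure (μ.restrict s) :=
    isFiniteMeasure_restrict.2 ((measure_mono hsK).trans_lt hK.measure_lt_top).ne
  obtain ⟨C, hC⟩ := hK.exists_bound_of_continuousOn hf
  exact MemLp.of_bound ((hf.mono hsK).aestronglyMeasurable hs) C
    ((ae_restrict_iff' hs).2 (ae_of_all _ fun x hx => hC x (hsK hx)))

theorem setIntegral_mul_eq_integral_mul_indicator {X : Type*} [MeasurableSpace X]
    {μ : Measure X} {S s : Set X} (hS : MeasurableSet S) (hSs : S ⊆ s) (g ψ : X → ℝ) :
    ∫ x in S, g x * ψ x ∂μ = ∫ x in s, g x * S.indicator ψ x ∂μ := by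
  simp_rw [← indicator_mul_right]
  rw [integral_indicator hS, Measure.restrict_restrict hS, inter_eq_self_of_subset_left hSs]

namespace C1Nhd
variable {v : ℝ × ℝ → ℝ} {s : Set (ℝ × ℝ)}

theorem continuousOn (hv : C1Nhd v s) : ContinuousOn v (closure s) := by
  obtain ⟨U, -, hsU, hvU⟩ := hv
  exact hvU.continuousOn.mono hsU

theorem continuousOn_fderiv (hv : C1Nhd v s) : ContinuousOn (fderiv ℝ v) (closure s) := by
  obtain ⟨U, hU, hsU, hvU⟩ := hv
  exact (hvU.continuousOn_fderiv_of_isOpen hU le_rfl).mono hsU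

theorem continuousOn_pd1 (hv : C1Nhd v s) : ContinuousOn (pd1 v) (closure s) :=
  hv.continuousOn_fderiv.clm_apply continuousOn_const

theorem continuousOn_pd2 (hv : C1Nhd v s) : ContinuousOn (pd2 v) (closure s) :=
  hv.continuousOn_fderiv.clm_apply continuousOn_const

theorem hasFDerivAt (hv : C1Nhd v s) {x : ℝ × ℝ} (hx : x ∈ closure s) :
    HasFDerivAt v (fderiv ℝ v x) x := by
  obtain ⟨U, hU, hsU, hvU⟩ := hv
  exact ((hvU.differentiableOn one_ne_zero).differentiableAt (hU.mem_nhds (hsU hx))).hasFDerivAt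

theorem hasDerivAt_pd2 (hv : C1Nhd v s) {x₁ t : ℝ} (hx : (x₁, t) ∈ closure s) :
    HasDerivAt (fun t => v (x₁, t)) (pd2 v (x₁, t)) t :=
  (hv.hasFDerivAt hx).comp_hasDerivAt t ((hasDerivAt_const t x₁).prodMk (hasDerivAt_id t))

end C1Nhd

theorem mul_eq_intervalIntegral_add_mul_deriv {f f' : ℝ → ℝ} {h : ℝ}
    (hf : ∀ t ∈ uIcc (-h) 0, HasDerivAt f (f' t) t) (hf' : IntervalIntegrable f' volume (-h) 0) :
    h * f 0 = ∫ t in (-h)..0, (f t + (t + h) * f' t) := by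
  have := intervalIntegral.integral_deriv_mul_eq_sub (u' := fun _ => 1)
    (fun t _ => (hasDerivAt_id t).add_const h) hf intervalIntegrable_const hf'
  simpa using this.symm

theorem setIntegral_Ioo_prod_Ioo_eq_iterated {c d s t : ℝ} (hcd : c ≤ d) (hst : s ≤ t)
    {g : ℝ × ℝ → ℝ} (hg : IntegrableOn g (Ioo c d ×ˢ Ioo s t)) :
    ∫ x in Ioo c d ×ˢ Ioo s t, g x = ∫ x₁ in c..d, ∫ x₂ in s..t, g (x₁, x₂) := by
  rw [Measure.volume_eq_prod, setIntegral_prod g hg, intervalIntegral.integral_of_le hcd,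
    integral_Ioc_eq_integral_Ioo]
  refine setIntegral_congr_fun measurableSet_Ioo fun x₁ _ => ?_
  rw [intervalIntegral.integral_of_le hst, integral_Ioc_eq_integral_Ioo]

theorem Icc_prod_Icc_subset_closure {c d h : ℝ} {s : Set (ℝ × ℝ)} (hcd : c < d) (hh : 0 < h)
    (hs : Ioo c d ×ˢ Ioo (-h) 0 ⊆ s) : Icc c d ×ˢ Icc (-h) 0 ⊆ closure s := by
  rw [← closure_Ioo hcd.ne, ← closure_Ioo (neg_lt_zero.2 hh).ne, ← closure_prod_eq]
  exact closure_mono hs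

theorem mul_integral_trace_eq {v : ℝ × ℝ → ℝ} {s : Set (ℝ × ℝ)} (hv : C1Nhd v s) {c d h : ℝ}
    (hcd : c < d) (hh : 0 < h) (hs : Ioo c d ×ˢ Ioo (-h) 0 ⊆ s) :
    h * ∫ x₁ in c..d, v (x₁, 0) = (∫ x in Ioo c d ×ˢ Ioo (-h) 0, v x)
      + ∫ x in Ioo c d ×ˢ Ioo (-h) 0, (x.2 + h) * pd2 v x := by
  have hK := Icc_prod_Icc_subset_closure hcd hh hs
  have hint {f : ℝ × ℝ → ℝ} (hf : ContinuousOn f (closure s)) :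
      IntegrableOn f (Ioo c d ×ˢ Ioo (-h) 0) :=
    ((hf.mono hK).integrableOn_compact (isCompact_Icc.prod isCompact_Icc)).mono_set
      (prod_mono Ioo_subset_Icc_self Ioo_subset_Icc_self)
  have hρ : ContinuousOn (fun x : ℝ × ℝ => (x.2 + h) * pd2 v x) (closure s) :=
    (continuous_snd.add continuous_const).continuousOn.mul hv.continuousOn_pd2
  rw [← integral_add (hint hv.continuousOn) (hint hρ),
    setIntegral_Ioo_prod_Ioo_eq_iterated (g := fun x => v x + (x.2 + h) * pd2 v x) hcd.le
      (by linarith) (hint (hv.continuousOn.add hρ)), ← intervalIntegral.integral_const_mul]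
  refine intervalIntegral.integral_congr fun x₁ hx₁ => ?_
  rw [uIcc_of_le hcd.le] at hx₁
  have hslice : ∀ t ∈ uIcc (-h) 0, (x₁, t) ∈ closure s := fun t ht =>
    hK ⟨hx₁, by rwa [uIcc_of_le (by linarith)] at ht⟩
  refine mul_eq_intervalIntegral_add_mul_deriv (fun t ht => hv.hasDerivAt_pd2 (hslice t ht)) ?_
  exact (hv.continuousOn_pd2.comp (Continuous.prodMk_right x₁).continuousOn
    hslice).intervalIntegrable

section Energy
variable {v : ℝ × ℝ → ℝ} {s : Set (ℝ × ℝ)}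

theorem integrableOn_energy (hsc : IsCompact (closure s)) (hv : C1Nhd v s) :
    IntegrableOn (fun x => v x ^ 2 + dot (grad v x) (grad v x)) s := by
  have hc : ContinuousOn (fun x => v x ^ 2 + dot (grad v x) (grad v x)) (closure s) := by
    simp only [dot, grad]
    exact (hv.continuousOn.pow 2).add ((hv.continuousOn_pd1.mul hv.continuousOn_pd1).add
      (hv.continuousOn_pd2.mul hv.continuousOn_pd2))
  exact (hc.integrableOn_compact hsc).mono_set subset_closure

theorem setIntegral_sq_le_energy (hsc : IsCompact (closure s)) (hv : C1Nhd v s) :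
    ∫ x in s, v x ^ 2 ≤ ∫ x in s, (v x ^ 2 + dot (grad v x) (grad v x)) := by
  refine integral_mono_of_nonneg (ae_of_all _ fun x => sq_nonneg _)
    (integrableOn_energy hsc hv) (ae_of_all _ fun x => ?_)
  simp only [dot, grad]
  nlinarith [sq_nonneg (pd1 v x), sq_nonneg (pd2 v x)]

theorem setIntegral_sq_pd2_le_energy (hsc : IsCompact (closure s)) (hv : C1Nhd v s)
    {t : Set (ℝ × ℝ)} (ht : t ⊆ s) :
    ∫ x in t, pd2 v x ^ 2 ≤ ∫ x in s, (v x ^ 2 + dot (grad v x) (grad v x)) := by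
  calc ∫ x in t, pd2 v x ^ 2 ≤ ∫ x in s, pd2 v x ^ 2 :=
        setIntegral_mono_set (((hv.continuousOn_pd2.pow 2).integrableOn_compact hsc).mono_set
          subset_closure) (ae_of_all _ fun x => sq_nonneg _) ht.eventuallyLE
    _ ≤ _ := by
        refine integral_mono_of_nonneg (ae_of_all _ fun x => sq_nonneg _)
          (integrableOn_energy hsc hv) (ae_of_all _ fun x => ?_)
        simp only [dot, grad]
        nlinarith [sq_nonneg (pd1 v x), sq_nonneg (v x)]

end Energy

theorem tendsto_integral_trace {s : Set (ℝ × ℝ)} (hs : MeasurableSet s)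
    (hsc : IsCompact (closure s)) {c d h : ℝ} (hcd : c < d) (hh : 0 < h)
    (hSs : Ioo c d ×ˢ Ioo (-h) 0 ⊆ s) {uu : ℕ → ℝ × ℝ → ℝ} {u : ℝ × ℝ → ℝ} {M : ℝ}
    (hreg : ∀ n, C1Nhd (uu n) s)
    (hbdd : ∀ n, ∫ x in s, ((uu n x) ^ 2 + dot (grad (uu n) x) (grad (uu n) x)) ≤ M)
    (hu : C1Nhd u s)
    (huw1 : ∀ φ : ℝ × ℝ → ℝ, Continuous φ →
      Tendsto (fun n => ∫ x in s, uu n x * φ x) atTop (𝓝 (∫ x in s, u x * φ x)))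
    (huw2 : ∀ Φ : ℝ × ℝ → ℝ × ℝ, Continuous Φ →
      Tendsto (fun n => ∫ x in s, dot (grad (uu n) x) (Φ x)) atTop
        (𝓝 (∫ x in s, dot (grad u x) (Φ x)))) :
    Tendsto (fun n => ∫ x₁ in c..d, uu n (x₁, 0)) atTop (𝓝 (∫ x₁ in c..d, u (x₁, 0))) := by
  set S := Ioo c d ×ˢ Ioo (-h) (0 : ℝ)
  have hS : MeasurableSet S := measurableSet_Ioo.prod measurableSet_Ioo
  have : IsFiniteMeasure (volume.restrict s) :=
    isFiniteMeasure_restrict.2 ((measure_mono subset_closure).trans_lt hsc.measure_lt_top).ne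
  have hmem {f : ℝ × ℝ → ℝ} (hf : ContinuousOn f (closure s)) :
      MemLp f 2 (volume.restrict s) := hf.memLp_restrict hsc subset_closure hs 2
  have hweak₁ := tendsto_integral_mul_of_forall_boundedContinuous
    (fun n => hmem (hreg n).continuousOn) (hmem hu.continuousOn)
    (fun n => (setIntegral_sq_le_energy hsc (hreg n)).trans (hbdd n))
    (fun φ => huw1 φ φ.continuous) ((hmem (f := fun _ => 1) continuousOn_const).indicator hS)
  have hweak₂ := tendsto_integral_mul_of_forall_boundedContinuous
    (fun n => hmem (hreg n).continuousOn_pd2) (hmem hu.continuousOn_pd2)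
    (fun n => (setIntegral_sq_pd2_le_energy hsc (hreg n) subset_rfl).trans (hbdd n))
    (fun φ => by simpa [dot, grad] using huw2 (fun x => (0, φ x)) (by fun_prop))
    ((hmem (f := fun x => x.2 + h) (by fun_prop)).indicator hS)
  have key {v : ℝ × ℝ → ℝ} (hv : C1Nhd v s) : ∫ x₁ in c..d, v (x₁, 0) =
      h⁻¹ * ((∫ x in s, v x * S.indicator (fun _ => 1) x)
        + ∫ x in s, pd2 v x * S.indicator (fun x => x.2 + h) x) := by
    rw [← setIntegral_mul_eq_integral_mul_indicator hS hSs,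
      ← setIntegral_mul_eq_integral_mul_indicator hS hSs]
    simp only [mul_one, mul_comm (pd2 v _)]
    rw [← mul_integral_trace_eq hv hcd hh hSs, inv_mul_cancel_left₀ hh.ne']
  simpa only [key (hreg _), key hu] using (hweak₁.add hweak₂).const_mul h⁻¹

theorem abs_strip_average_sub_trace_le {v : ℝ × ℝ → ℝ} {s : Set (ℝ × ℝ)} (hv : C1Nhd v s)
    {c d ε : ℝ} (hcd : c < d) (hε : 0 < ε) (hs : Ioo c d ×ˢ Ioo (-ε) 0 ⊆ s) :
    |(1 / ε) * (∫ x₁ in c..d, ∫ x₂ in (-ε)..0, v (x₁, x₂)) - ∫ x₁ in c..d, v (x₁, 0)|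
      ≤ √(∫ x in Ioo c d ×ˢ Ioo (-ε) 0, pd2 v x ^ 2) * √((d - c) * ε / 3) := by
  set R := Ioo c d ×ˢ Ioo (-ε) (0 : ℝ)
  have hK := Icc_prod_Icc_subset_closure hcd hε hs
  have hmem {f : ℝ × ℝ → ℝ} (hf : ContinuousOn f (closure s)) (p : ENNReal) :
      MemLp f p (volume.restrict R) :=
    (hf.mono hK).memLp_restrict (isCompact_Icc.prod isCompact_Icc)
      (prod_mono Ioo_subset_Icc_self Ioo_subset_Icc_self)
      (measurableSet_Ioo.prod measurableSet_Ioo) p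
  have hρ : MemLp (fun x : ℝ × ℝ => x.2 + ε) 2 (volume.restrict R) := hmem (by fun_prop) 2
  have havg : ∫ x₁ in c..d, ∫ x₂ in (-ε)..0, v (x₁, x₂) = ∫ x in R, v x :=
    (setIntegral_Ioo_prod_Ioo_eq_iterated hcd.le (by linarith)
      (memLp_one_iff_integrable.1 (hmem hv.continuousOn 1))).symm
  have hweight : ∫ x in R, (x.2 + ε) ^ 2 = (d - c) * ε ^ 3 / 3 := by
    rw [setIntegral_Ioo_prod_Ioo_eq_iterated (g := fun x => (x.2 + ε) ^ 2) hcd.le (by linarith)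
      (memLp_one_iff_integrable.1 (hmem (by fun_prop) 1))]
    simp only [intervalIntegral.integral_comp_add_right (fun t => t ^ 2), integral_pow,
      intervalIntegral.integral_const, smul_eq_mul]
    ring
  have hdiff : (1 / ε) * (∫ x₁ in c..d, ∫ x₂ in (-ε)..0, v (x₁, x₂)) - ∫ x₁ in c..d, v (x₁, 0)
      = -ε⁻¹ * ∫ x in R, (x.2 + ε) * pd2 v x := by
    have := mul_integral_trace_eq hv hcd hε hs
    rw [havg]
    field_simp
    linarith
  rw [hdiff, abs_mul, abs_neg, abs_inv, abs_of_pos hε]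
  calc ε⁻¹ * |∫ x in R, (x.2 + ε) * pd2 v x|
      ≤ ε⁻¹ * (√((d - c) * ε ^ 3 / 3) * √(∫ x in R, pd2 v x ^ 2)) := by
        gcongr
        simpa only [hweight] using hρ.abs_integral_mul_le (hmem hv.continuousOn_pd2 2)
    _ = √(∫ x in R, pd2 v x ^ 2) * √((d - c) * ε / 3) := by
        rw [show (d - c) * ε ^ 3 / 3 = ε ^ 2 * ((d - c) * ε / 3) by ring,
          Real.sqrt_mul (sq_nonneg ε), Real.sqrt_sq hε.le]
        field_simp

theorem thin_strip_trace_identification_general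
    (a b : ℝ) (hb : 0 < b)
    (c d : ℝ) (hc : 0 ≤ c) (hcd : c < d) (hd : d ≤ a)
    (ε : ℕ → ℝ) (hεpos : ∀ n, 0 < ε n) (hεlim : Tendsto ε atTop (𝓝 0))
    (uu : ℕ → ℝ × ℝ → ℝ)
    (hreg : ∀ n, C1Nhd (uu n) (Omega0 a b))
    (M : ℝ)
    (hbdd : ∀ n, ∫ x in Omega0 a b,
      ((uu n x) ^ 2 + dot (grad (uu n) x) (grad (uu n) x)) ≤ M)
    (u : ℝ × ℝ → ℝ) (hu : C1Nhd u (Omega0 a b))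
    (huw1 : ∀ φ : ℝ × ℝ → ℝ, Continuous φ →
      Tendsto (fun n => ∫ x in Omega0 a b, uu n x * φ x) atTop
        (𝓝 (∫ x in Omega0 a b, u x * φ x)))
    (huw2 : ∀ Φ : ℝ × ℝ → ℝ × ℝ, Continuous Φ →
      Tendsto (fun n => ∫ x in Omega0 a b, dot (grad (uu n) x) (Φ x)) atTop
        (𝓝 (∫ x in Omega0 a b, dot (grad u x) (Φ x)))) :
    Tendsto (fun n => (1 / ε n) *
        ∫ x₁ in c..d, ∫ x₂ in (-(ε n))..(0:ℝ), uu n (x₁, x₂)) atTop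
      (𝓝 (∫ x₁ in c..d, u (x₁, 0))) := by
  have hΩ : MeasurableSet (Omega0 a b) := measurableSet_Ioo.prod measurableSet_Ioo
  have hΩc : IsCompact (closure (Omega0 a b)) :=
    ((Metric.isBounded_Ioo 0 a).prod (Metric.isBounded_Ioo (-b) 0)).isCompact_closure
  have hstrip {h : ℝ} (hh : h ≤ b) : Ioo c d ×ˢ Ioo (-h) 0 ⊆ Omega0 a b :=
    prod_mono (Ioo_subset_Ioo hc hd) (Ioo_subset_Ioo_left (neg_le_neg hh))
  have htrace := tendsto_integral_trace hΩ hΩc hcd hb (hstrip le_rfl) hreg hbdd hu huw1 huw2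
  have hclose : ∀ᶠ n in atTop, ‖(1 / ε n) * (∫ x₁ in c..d, ∫ x₂ in (-(ε n))..0, uu n (x₁, x₂))
      - ∫ x₁ in c..d, uu n (x₁, 0)‖ ≤ √M * √((d - c) * ε n / 3) := by
    filter_upwards [hεlim.eventually_lt_const hb] with n hn
    refine (abs_strip_average_sub_trace_le (hreg n) hcd (hεpos n) (hstrip hn.le)).trans ?_
    gcongr
    exact (setIntegral_sq_pd2_le_energy hΩc (hreg n) (hstrip hn.le)).trans (hbdd n)
  have hgap : Tendsto (fun n => √M * √((d - c) * ε n / 3)) atTop (𝓝 0) := by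
    simpa using (((hεlim.const_mul (d - c)).div_const 3).sqrt).const_mul √M
  simpa using (squeeze_zero_norm' hclose hgap).add htrace

/-- **Identification of the boundary trace by thin-strip averages.** If `u^{ε_n} ⇀ u`
weakly in `H¹(Ω₀)` with a uniform `H¹` bound, then the averages over the thin strip
of height `ε_n` below the upper boundary converge to the boundary trace of `u`. -/
theorem thin_strip_trace_identification
    (a b : ℝ) (ha : 0 < a) (hb : 0 < b)
    (c d : ℝ) (hc : 0 ≤ c) (hcd : c < d) (hd : d ≤ a)
    (ε : ℕ → ℝ) (hεpos : ∀ n, 0 < ε n) (hεlim : Tendsto ε atTop (𝓝 0))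
    (uu : ℕ → ℝ × ℝ → ℝ)
    (hreg : ∀ n, C1Nhd (uu n) (Omega0 a b))
    (M : ℝ)
    (hbdd : ∀ n, ∫ x in Omega0 a b,
      ((uu n x) ^ 2 + dot (grad (uu n) x) (grad (uu n) x)) ≤ M)
    (u : ℝ × ℝ → ℝ) (hu : C1Nhd u (Omega0 a b))
    (huw1 : ∀ φ : ℝ × ℝ → ℝ, Continuous φ →
      Tendsto (fun n => ∫ x in Omega0 a b, uu n x * φ x) atTop
        (𝓝 (∫ x in Omega0 a b, u x * φ x)))
    (huw2 : ∀ Φ : ℝ × ℝ → ℝ × ℝ, Continuous Φ →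
      Tendsto (fun n => ∫ x in Omega0 a b, dot (grad (uu n) x) (Φ x)) atTop
        (𝓝 (∫ x in Omega0 a b, dot (grad u x) (Φ x)))) :
    Tendsto (fun n => (1 / ε n) *
        ∫ x₁ in c..d, ∫ x₂ in (-(ε n))..(0:ℝ), uu n (x₁, x₂)) atTop
      (𝓝 (∫ x₁ in c..d, u (x₁, 0))) :=
  thin_strip_trace_identification_general a b hb c d hc hcd hd ε hεpos hεlim uu hreg M hbdd u hu
    huw1 huw2
end
end
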